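/- Let X be a bipartite mixed graph with a unique perfect matching and H_α its α-hermitian adjacency matrix. Then every diagonal entry of the inverse matrix H_α⁻¹ is zero. -/

import Mathlib

open SimpleGraph
open scoped Classical

noncomputable section

variable {V : Type*}

structure MixedGraph (V : Type*) where
  digon : V → V → Prop
  arc : V → V → Prop
  digon_symm : ∀ u v, digon u v → digon v u
  digon_irrefl : ∀ v, ¬ digon v v
  arc_irrefl : ∀ v, ¬ arc v v
  arc_asymm : ∀ u v, arc u v → ¬ arc v u
  digon_arc : ∀ u v, digon u v → ¬ arc u v ∧ ¬ arc v u

def MixedGraph.underlying (X : MixedGraph V) : SimpleGraph V where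
  Adj u v := X.digon u v ∨ X.arc u v ∨ X.arc v u
  symm := by
    constructor
    intro u v h
    rcases h with h | h | h
    · exact Or.inl (X.digon_symm u v h)
    · exact Or.inr (Or.inr h)
    · exact Or.inr (Or.inl h)
  loopless := by
    constructor
    intro v h
    rcases h with h | h | h
    · exact X.digon_irrefl v h
    · exact X.arc_irrefl v h
    · exact X.arc_irrefl v h

/-- The α-hermitian adjacency matrix of a mixed graph. -/
def Halpha (X : MixedGraph V) (α : ℂ) : Matrix V V ℂ := fun u v =>
  if X.digon u v then 1
  else if X.arc u v then α
  else if X.arc v u then (starRingEnd ℂ) α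
  else 0

/-- The value h_α of a walk: product of matrix entries along consecutive vertices. -/
def hWalk (X : MixedGraph V) (α : ℂ) {u v : V} (p : X.underlying.Walk u v) : ℂ :=
  (p.darts.map (fun d => Halpha X α d.toProd.1 d.toProd.2)).prod

/-- A co-augmenting path w.r.t. a matching edge set `M`: a path whose edges alternate
matching / non-matching, beginning and ending with matching edges. -/
def IsCoAugmenting (G : SimpleGraph V) (M : Set (Sym2 V)) {u v : V} (p : G.Walk u v) : Prop :=
  p.IsPath ∧ Odd p.edges.length ∧
    ∀ i : Fin p.edges.length, (p.edges.get i ∈ M ↔ Even i.val)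

/-- `G` is unicyclic: connected with exactly one cycle (all cycles have the same edge set). -/
def IsUnicyclic (G : SimpleGraph V) : Prop :=
  G.Connected ∧ (∃ (u : V) (c : G.Walk u u), c.IsCycle) ∧
    ∀ (u v : V) (c : G.Walk u u) (d : G.Walk v v), c.IsCycle → d.IsCycle →
      {e | e ∈ c.edges} = {e | e ∈ d.edges}

/-- A peg: a matching edge incident to a vertex of the cycle `c` but not an edge of `c`. -/
def IsPeg (G : SimpleGraph V) (M : G.Subgraph) {u : V} (c : G.Walk u u) (e : Sym2 V) : Prop :=
  e ∈ M.edgeSet ∧ e ∉ c.edges ∧ ∃ x ∈ c.support, x ∈ e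

/-- Restriction of a matching to an induced subgraph. -/
def restrictMatching (G : SimpleGraph V) (M : G.Subgraph) (s : Set V) :
    (G.induce s).Subgraph where
  verts := Set.univ
  Adj a b := M.Adj a.1 b.1
  adj_sub h := M.adj_sub h
  edge_vert _ := Set.mem_univ _
  symm := by
    constructor
    intro _ _ h
    exact M.adj_symm h

/-- The sign `f_W` at the end of a walk: starts at 1 and flips across non-matching edges. -/
def fEnd (G : SimpleGraph V) (M : Set (Sym2 V)) : ∀ {u v : V}, G.Walk u v → ℤ
  | _, _, SimpleGraph.Walk.nil => 1
  | _, _, @SimpleGraph.Walk.cons _ _ u w _ _ p =>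
      if s(u, w) ∈ M then fEnd G M p else - fEnd G M p

end

/-!
Colour the bipartite graph with `c : V → Fin 2` and put `D = diag((-1)^c v)`. Since `H_α` is
supported on edges, which join the two colour classes, `D H_α D = -H_α`; as `D⁻¹ = D`, inverting
gives `D H_α⁻¹ D = -H_α⁻¹`, whose diagonal reads `H_α⁻¹ i i = -H_α⁻¹ i i`.
-/

open Matrix

namespace Matrix

variable {n K : Type*} [Fintype n] [DecidableEq n]

theorem inv_eq_neg_diagonal_mul_inv_mul_diagonal [CommRing K] (A : Matrix n n K) (s : n → K)
    (hs : ∀ i, s i * s i = 1) (hA : diagonal s * A * diagonal s = -A) :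
    A⁻¹ = -(diagonal s * A⁻¹ * diagonal s) := by
  have hss : diagonal s * diagonal s = 1 := by
    rw [diagonal_mul_diagonal, funext hs, diagonal_one]
  have hinv : (diagonal s)⁻¹ = diagonal s := inv_eq_left_inv hss
  have hinv_neg : (-diagonal s)⁻¹ = -diagonal s := inv_eq_left_inv (by rw [neg_mul_neg, hss])
  calc A⁻¹ = (-diagonal s * A * diagonal s)⁻¹ := by rw [neg_mul, neg_mul, hA, neg_neg]
    _ = diagonal s * A⁻¹ * -diagonal s := by rw [mul_inv_rev, mul_inv_rev, hinv, hinv_neg, mul_assoc]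
    _ = -(diagonal s * A⁻¹ * diagonal s) := by rw [mul_neg]

theorem inv_apply_self_eq_zero_of_diagonal_conj_eq_neg [Field K] [CharZero K]
    (A : Matrix n n K) (s : n → K) (hs : ∀ i, s i * s i = 1)
    (hA : diagonal s * A * diagonal s = -A) (i : n) : A⁻¹ i i = 0 := by
  have h := congrFun₂ (inv_eq_neg_diagonal_mul_inv_mul_diagonal A s hs hA) i i
  simp only [neg_apply, diagonal_mul, mul_diagonal] at h
  rw [mul_right_comm, hs, one_mul] at h
  exact self_eq_neg.mp h

end Matrix

namespace SimpleGraph.Coloring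

variable {V R : Type*} {G : SimpleGraph V}

theorem neg_one_pow_mul_neg_one_pow_of_adj [Monoid R] [HasDistribNeg R] (c : G.Coloring (Fin 2))
    {u v : V} (h : G.Adj u v) : (-1 : R) ^ (c u : ℕ) * (-1) ^ (c v : ℕ) = -1 := by
  have hne := c.valid h
  rcases Fin.exists_fin_two.mp ⟨c u, rfl⟩ with hu | hu <;>
    rcases Fin.exists_fin_two.mp ⟨c v, rfl⟩ with hv | hv <;> simp_all

theorem diagonal_neg_one_pow_conj_eq_neg [Fintype V] [DecidableEq V] [CommRing R]
    (c : G.Coloring (Fin 2)) (A : Matrix V V R) (hA : ∀ u v, ¬ G.Adj u v → A u v = 0) :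
    (diagonal fun v => (-1 : R) ^ (c v : ℕ)) * A * diagonal (fun v => (-1 : R) ^ (c v : ℕ)) =
      -A := by
  ext u v
  rw [neg_apply, mul_diagonal, diagonal_mul]
  by_cases h : G.Adj u v
  · rw [mul_right_comm, c.neg_one_pow_mul_neg_one_pow_of_adj h, neg_one_mul]
  · simp [hA u v h]

end SimpleGraph.Coloring

theorem Halpha_apply_eq_zero_of_not_adj {V : Type*} (X : MixedGraph V) (α : ℂ) {u v : V}
    (h : ¬ X.underlying.Adj u v) : Halpha X α u v = 0 := by
  simp only [MixedGraph.underlying, not_or] at h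
  simp [Halpha, h.1, h.2.1, h.2.2]

theorem stmt6_general {V : Type*} [Fintype V] [DecidableEq V]
    (X : MixedGraph V) (α : ℂ)
    (hbip : X.underlying.Colorable 2) :
    ∀ i : V, (Halpha X α)⁻¹ i i = 0 := by
  obtain ⟨c⟩ := hbip
  refine inv_apply_self_eq_zero_of_diagonal_conj_eq_neg _ (fun v => (-1 : ℂ) ^ (c v : ℕ)) ?_ ?_
  · intro v
    rw [← mul_pow, neg_one_mul, neg_neg, one_pow]
  · exact c.diagonal_neg_one_pow_conj_eq_neg _ fun _ _ => Halpha_apply_eq_zero_of_not_adj X α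

/-- All diagonal entries of the inverse of the α-hermitian adjacency matrix of a
bipartite mixed graph with a unique perfect matching vanish. -/
theorem stmt6 {V : Type*} [Fintype V] [DecidableEq V]
    (X : MixedGraph V) (α : ℂ) (hα : ‖α‖ = 1)
    (hbip : X.underlying.Colorable 2)
    (M : X.underlying.Subgraph) (hM : M.IsPerfectMatching)
    (huniq : ∀ N : X.underlying.Subgraph, N.IsPerfectMatching → N = M) :
    ∀ i : V, (Halpha X α)⁻¹ i i = 0 :=
  stmt6_general X α hbip
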